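/- For the figure-8 graph with entropy-one constraint, the vector v = (2/(1+3e^{−x}), 1, 2/(1+3e^{−x}), 1) is a left eigenvector of the weighted adjacency matrix A_{−l} with eigenvalue 1, where e^{−y} = (1−e^{−x})/(1+3e^{−x}) and x > 0. -/
import Mathlib


open Real

theorem figure8_left_eigenvector (x : ℝ) (hx : 0 < x)
    (ey : ℝ) (hey : ey = (1 - exp (-x)) / (1 + 3 * exp (-x))) :
    Matrix.vecMul ![2 / (1 + 3 * exp (-x)), 1, 2 / (1 + 3 * exp (-x)), 1]
      !![exp (-x), exp (-x), 0, exp (-x);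
         ey, ey, ey, 0;
         0, exp (-x), exp (-x), exp (-x);
         ey, 0, ey, ey] =
      ![2 / (1 + 3 * exp (-x)), 1, 2 / (1 + 3 * exp (-x)), 1] := by
  have he : 0 < exp (-x) := exp_pos _
  have hd : (1 + 3 * exp (-x)) ≠ 0 := by positivity
  funext i
  fin_cases i <;>
    simp [Matrix.vecMul, dotProduct, Fin.sum_univ_four, hey] <;>
    field_simp <;> ring
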